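/- Let p ≥ 1, let a, b : [0,∞) → ℝ be nonnegative nondecreasing continuous functions, and let l be a nonnegative function continuous on (0,∞) and locally integrable on [0,∞). If u is a continuous nonnegative function on [0,∞) satisfying u(t) ≤ a(t) + b(t)(∫₀ᵗ l(s) u(s)^p ds)^{1/p} for all t ∈ [0,∞), then u(t) ≤ 2^{1-1/p} a(t) exp((2^{p-1} b(t)^p / p) ∫₀ᵗ l(s) ds) for all t ∈ [0,∞). -/

import Mathlib

open MeasureTheory Set

/-!
Raising the hypothesis to the `p`-th power with `(x + y)^p ≤ 2^(p-1) (x^p + y^p)` and freezing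
`a`, `b` at the final time `T` gives the linear inequality `u^p ≤ α + β ∫₀ᵗ l u^p` on `[0, T]`, with
`α = 2^(p-1) a(T)^p` and `β = 2^(p-1) b(T)^p`. Gronwall's lemma bounds `β ∫₀ᵀ l u^p` by
`α (exp (β ∫₀ᵀ l) - 1)`; inserting this back into the hypothesis and using
`x^(1/p) + y^(1/p) ≤ 2^(1-1/p) (x + y)^(1/p)` gives the claim.
-/

lemma Real.rpow_add_le_mul_rpow_add_rpow {x y p : ℝ} (hx : 0 ≤ x) (hy : 0 ≤ y) (hp : 1 ≤ p) :
    (x + y) ^ p ≤ 2 ^ (p - 1) * (x ^ p + y ^ p) := by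
  lift x to NNReal using hx
  lift y to NNReal using hy
  exact_mod_cast NNReal.rpow_add_le_mul_rpow_add_rpow x y hp

lemma Real.rpow_one_div_add_rpow_one_div_le {x y p : ℝ} (hx : 0 ≤ x) (hy : 0 ≤ y) (hp : 1 ≤ p) :
    x ^ (1 / p) + y ^ (1 / p) ≤ 2 ^ (1 - 1 / p) * (x + y) ^ (1 / p) := by
  have hp0 : 0 < p := by linarith
  have hroot : ∀ z : ℝ, 0 ≤ z → (z ^ (1 / p)) ^ p = z := fun z hz => by
    rw [← Real.rpow_mul hz, one_div_mul_cancel hp0.ne', Real.rpow_one]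
  have hsum : 0 ≤ x ^ (1 / p) + y ^ (1 / p) := by positivity
  calc x ^ (1 / p) + y ^ (1 / p) = ((x ^ (1 / p) + y ^ (1 / p)) ^ p) ^ (1 / p) := by
        rw [← Real.rpow_mul hsum, mul_one_div_cancel hp0.ne', Real.rpow_one]
    _ ≤ (2 ^ (p - 1) * (x + y)) ^ (1 / p) := by
        gcongr
        simpa only [hroot x hx, hroot y hy] using Real.rpow_add_le_mul_rpow_add_rpow
          (Real.rpow_nonneg hx (1 / p)) (Real.rpow_nonneg hy (1 / p)) hp
    _ = 2 ^ (1 - 1 / p) * (x + y) ^ (1 / p) := by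
        rw [Real.mul_rpow (by positivity) (by positivity), ← Real.rpow_mul zero_le_two]
        congr 2
        field_simp

lemma rpow_le_of_le_add_mul_rpow_one_div {u x y z p : ℝ} (hu : 0 ≤ u) (hx : 0 ≤ x) (hy : 0 ≤ y)
    (hz : 0 ≤ z) (hp : 1 ≤ p) (h : u ≤ x + y * z ^ (1 / p)) :
    u ^ p ≤ 2 ^ (p - 1) * (x ^ p + y ^ p * z) := by
  have hp0 : 0 < p := by linarith
  calc u ^ p ≤ (x + y * z ^ (1 / p)) ^ p := by gcongr
    _ ≤ 2 ^ (p - 1) * (x ^ p + (y * z ^ (1 / p)) ^ p) :=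
        Real.rpow_add_le_mul_rpow_add_rpow hx (by positivity) hp
    _ = 2 ^ (p - 1) * (x ^ p + y ^ p * z) := by
        rw [Real.mul_rpow hy (by positivity), ← Real.rpow_mul hz, one_div_mul_cancel hp0.ne',
          Real.rpow_one]

lemma add_mul_rpow_one_div_le {a b v w p : ℝ} (ha : 0 ≤ a) (hb : 0 ≤ b) (hv : 0 ≤ v) (hw : 0 ≤ w)
    (hp : 1 ≤ p) (h : b ^ p * v ≤ a ^ p * w) :
    a + b * v ^ (1 / p) ≤ 2 ^ (1 - 1 / p) * a * (1 + w) ^ (1 / p) := by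
  have hp0 : 0 < p := by linarith
  have hpow : ∀ c z : ℝ, 0 ≤ c → 0 ≤ z → (c ^ p * z) ^ (1 / p) = c * z ^ (1 / p) := by
    intro c z hc hz
    rw [Real.mul_rpow (by positivity) hz, ← Real.rpow_mul hc, mul_one_div_cancel hp0.ne',
      Real.rpow_one]
  calc a + b * v ^ (1 / p) ≤ a * (1 ^ (1 / p) + w ^ (1 / p)) := by
        rw [Real.one_rpow, mul_add, mul_one, ← hpow a w ha hw, ← hpow b v hb hv]
        gcongr
    _ ≤ a * (2 ^ (1 - 1 / p) * (1 + w) ^ (1 / p)) := by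
        gcongr
        exact Real.rpow_one_div_add_rpow_one_div_le zero_le_one hw hp
    _ = 2 ^ (1 - 1 / p) * a * (1 + w) ^ (1 / p) := by ring

lemma hasDerivAt_primitive_of_continuousOn_Ioo {g : ℝ → ℝ} {T t : ℝ}
    (hg_int : IntervalIntegrable g volume 0 T) (hg_cont : ContinuousOn g (Ioo 0 T))
    (ht : t ∈ Ioo 0 T) : HasDerivAt (fun x => ∫ s in (0:ℝ)..x, g s) (g t) t :=
  intervalIntegral.integral_hasDerivAt_right
    (hg_int.mono_set (uIcc_subset_uIcc left_mem_uIcc (mem_uIcc_of_le ht.1.le ht.2.le)))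
    (hg_cont.stronglyMeasurableAtFilter isOpen_Ioo t ht)
    (hg_cont.continuousAt (isOpen_Ioo.mem_nhds ht))

lemma continuousOn_primitive_Icc {g : ℝ → ℝ} {T : ℝ} (hT : 0 ≤ T)
    (hg_int : IntervalIntegrable g volume 0 T) :
    ContinuousOn (fun x => ∫ s in (0:ℝ)..x, g s) (Icc 0 T) := by
  simpa only [uIcc_of_le hT] using
    intervalIntegral.continuousOn_primitive_interval' hg_int left_mem_uIcc

lemma intervalIntegral_nonneg_of_nonneg_Ioc {g : ℝ → ℝ} {T : ℝ} (hT : 0 ≤ T)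
    (hg : ∀ t ∈ Ioc 0 T, 0 ≤ g t) : 0 ≤ ∫ s in (0:ℝ)..T, g s := by
  rw [intervalIntegral.integral_of_le hT]
  exact setIntegral_nonneg measurableSet_Ioc hg

theorem add_mul_integral_le_mul_exp_integral {l f : ℝ → ℝ} {α β T : ℝ} (hβ : 0 ≤ β) (hT : 0 ≤ T)
    (hl_cont : ContinuousOn l (Ioo 0 T)) (hl_nonneg : ∀ t ∈ Ioo 0 T, 0 ≤ l t)
    (hl_int : IntervalIntegrable l volume 0 T) (hf_cont : ContinuousOn f (Icc 0 T))
    (hf : ∀ t ∈ Ioo 0 T, f t ≤ α + β * ∫ s in (0:ℝ)..t, l s * f s) :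
    α + β * ∫ s in (0:ℝ)..T, l s * f s ≤ α * Real.exp (β * ∫ s in (0:ℝ)..T, l s) := by
  set v : ℝ → ℝ := fun t => ∫ s in (0:ℝ)..t, l s * f s
  set L : ℝ → ℝ := fun t => ∫ s in (0:ℝ)..t, l s
  have hlf_int : IntervalIntegrable (fun s => l s * f s) volume 0 T :=
    hl_int.mul_continuousOn (by rwa [uIcc_of_le hT])
  have hlf_cont : ContinuousOn (fun s => l s * f s) (Ioo 0 T) :=
    hl_cont.mul (hf_cont.mono Ioo_subset_Icc_self)
  -- `(α + β v) e^{-β L}` is nonincreasing, as its derivative is `β l (f - (α + β v)) e^{-β L}`.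
  set g : ℝ → ℝ := fun t => (α + β * v t) * Real.exp (-(β * L t))
  have hg_cont : ContinuousOn g (Icc 0 T) :=
    (continuousOn_const.add (continuousOn_const.mul (continuousOn_primitive_Icc hT hlf_int))).mul
      (continuousOn_const.mul (continuousOn_primitive_Icc hT hl_int)).neg.rexp
  have hg_deriv : ∀ t ∈ Ioo 0 T,
      HasDerivAt g (β * l t * (f t - (α + β * v t)) * Real.exp (-(β * L t))) t := by
    intro t ht
    have hlin : HasDerivAt (fun x => α + β * v x) (β * (l t * f t)) t :=
      ((hasDerivAt_primitive_of_continuousOn_Ioo hlf_int hlf_cont ht).const_mul β).const_add α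
    have hexp : HasDerivAt (fun x => Real.exp (-(β * L x)))
        (Real.exp (-(β * L t)) * -(β * l t)) t :=
      ((hasDerivAt_primitive_of_continuousOn_Ioo hl_int hl_cont ht).const_mul β).neg.exp
    refine (hlin.fun_mul hexp).congr_deriv ?_
    ring
  have hg_anti : AntitoneOn g (Icc 0 T) := by
    refine antitoneOn_of_hasDerivWithinAt_nonpos (convex_Icc 0 T) hg_cont
      (f' := fun t => β * l t * (f t - (α + β * v t)) * Real.exp (-(β * L t)))
      (fun t ht => ?_) (fun t ht => ?_) <;> rw [interior_Icc] at ht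
    · exact (hg_deriv t ht).hasDerivWithinAt
    · have : 0 ≤ β * l t := mul_nonneg hβ (hl_nonneg t ht)
      exact mul_nonpos_of_nonpos_of_nonneg
        (mul_nonpos_of_nonneg_of_nonpos this (sub_nonpos.2 (hf t ht))) (Real.exp_pos _).le
  have hgT : g T ≤ g 0 := hg_anti (left_mem_Icc.2 hT) (right_mem_Icc.2 hT) hT
  simp only [g, v, L, intervalIntegral.integral_same, mul_zero, neg_zero, Real.exp_zero, add_zero,
    mul_one] at hgT
  have := mul_le_mul_of_nonneg_right hgT (Real.exp_pos (β * L T)).le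
  rwa [mul_assoc, ← Real.exp_add, neg_add_cancel, Real.exp_zero, mul_one] at this

theorem stmt1_general (p : ℝ) (hp : 1 ≤ p)
    (a b l u : ℝ → ℝ)
    (ha_mono : MonotoneOn a (Ici 0))
    (ha_nonneg : ∀ t ∈ Ici (0:ℝ), 0 ≤ a t)
    (hb_mono : MonotoneOn b (Ici 0))
    (hb_nonneg : ∀ t ∈ Ici (0:ℝ), 0 ≤ b t)
    (hl_cont : ContinuousOn l (Ioi 0)) (hl_nonneg : ∀ t ∈ Ioi (0:ℝ), 0 ≤ l t)
    (hl_int : ∀ t : ℝ, 0 ≤ t → IntervalIntegrable l volume 0 t)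
    (hu_cont : ContinuousOn u (Ici 0)) (hu_nonneg : ∀ t ∈ Ici (0:ℝ), 0 ≤ u t)
    (hu : ∀ t ∈ Ici (0:ℝ),
      u t ≤ a t + b t * (∫ s in (0:ℝ)..t, l s * u s ^ p) ^ (1/p)) :
    ∀ t ∈ Ici (0:ℝ),
      u t ≤ (2:ℝ) ^ (1 - 1/p) * a t *
        Real.exp (((2:ℝ) ^ (p - 1) * b t ^ p / p) * ∫ s in (0:ℝ)..t, l s) := by
  intro T hT
  have hp0 : 0 < p := by linarith
  set v : ℝ → ℝ := fun t => ∫ s in (0:ℝ)..t, l s * u s ^ p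
  set L : ℝ := ∫ s in (0:ℝ)..T, l s
  have hv_nonneg : ∀ t ∈ Ici (0:ℝ), 0 ≤ v t := fun t ht =>
    intervalIntegral_nonneg_of_nonneg_Ioc ht fun s hs =>
      mul_nonneg (hl_nonneg s hs.1) (Real.rpow_nonneg (hu_nonneg s (le_of_lt hs.1)) p)
  have hL_nonneg : 0 ≤ L := intervalIntegral_nonneg_of_nonneg_Ioc hT fun s hs => hl_nonneg s hs.1
  have hbT : 0 ≤ b T := hb_nonneg T hT
  have hu_pow_le : ∀ t ∈ Ioo 0 T,
      u t ^ p ≤ 2 ^ (p - 1) * a T ^ p + 2 ^ (p - 1) * b T ^ p * v t := by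
    intro t ht
    have ht' : t ∈ Ici (0:ℝ) := le_of_lt ht.1
    calc u t ^ p ≤ 2 ^ (p - 1) * (a t ^ p + b t ^ p * v t) :=
          rpow_le_of_le_add_mul_rpow_one_div (hu_nonneg t ht') (ha_nonneg t ht')
            (hb_nonneg t ht') (hv_nonneg t ht') hp (hu t ht')
      _ ≤ 2 ^ (p - 1) * (a T ^ p + b T ^ p * v t) := by
          gcongr
          exacts [ha_nonneg t ht', ha_mono ht' hT ht.2.le, hv_nonneg t ht', hb_nonneg t ht',
            hb_mono ht' hT ht.2.le]
      _ = _ := by ring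
  have h_gronwall := add_mul_integral_le_mul_exp_integral (by positivity) hT
    (hl_cont.mono Ioo_subset_Ioi_self) (fun t ht => hl_nonneg t ht.1) (hl_int T hT)
    ((hu_cont.mono Icc_subset_Ici_self).rpow_const fun _ _ => Or.inr hp0.le) hu_pow_le
  have hv_le : b T ^ p * v T ≤ a T ^ p * (Real.exp (2 ^ (p - 1) * b T ^ p * L) - 1) := by
    refine le_of_mul_le_mul_left ?_ (by positivity : (0:ℝ) < 2 ^ (p - 1))
    linarith
  calc u T ≤ a T + b T * v T ^ (1 / p) := hu T hT
    _ ≤ 2 ^ (1 - 1 / p) * a T * (1 + (Real.exp (2 ^ (p - 1) * b T ^ p * L) - 1)) ^ (1 / p) :=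
        add_mul_rpow_one_div_le (ha_nonneg T hT) hbT (hv_nonneg T hT)
          (by simpa using Real.one_le_exp_iff.2 (by positivity)) hp hv_le
    _ = _ := by
        rw [add_sub_cancel, ← Real.exp_mul]
        congr 2
        ring

/-- Corollary 2.2, case γ = 1:
`u(t) ≤ a(t) + b(t)(∫₀ᵗ l(s) u(s)^p ds)^{1/p}` implies
`u(t) ≤ 2^{1-1/p} a(t) exp((2^{p-1} b(t)^p / p) ∫₀ᵗ l(s) ds)`. -/
theorem stmt1 (p : ℝ) (hp : 1 ≤ p)
    (a b l u : ℝ → ℝ)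
    (ha_cont : ContinuousOn a (Ici 0)) (ha_mono : MonotoneOn a (Ici 0))
    (ha_nonneg : ∀ t ∈ Ici (0:ℝ), 0 ≤ a t)
    (hb_cont : ContinuousOn b (Ici 0)) (hb_mono : MonotoneOn b (Ici 0))
    (hb_nonneg : ∀ t ∈ Ici (0:ℝ), 0 ≤ b t)
    (hl_cont : ContinuousOn l (Ioi 0)) (hl_nonneg : ∀ t ∈ Ioi (0:ℝ), 0 ≤ l t)
    (hl_int : ∀ t : ℝ, 0 ≤ t → IntervalIntegrable l volume 0 t)
    (hu_cont : ContinuousOn u (Ici 0)) (hu_nonneg : ∀ t ∈ Ici (0:ℝ), 0 ≤ u t)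
    (hu : ∀ t ∈ Ici (0:ℝ),
      u t ≤ a t + b t * (∫ s in (0:ℝ)..t, l s * u s ^ p) ^ (1/p)) :
    ∀ t ∈ Ici (0:ℝ),
      u t ≤ (2:ℝ) ^ (1 - 1/p) * a t *
        Real.exp (((2:ℝ) ^ (p - 1) * b t ^ p / p) * ∫ s in (0:ℝ)..t, l s) :=
  stmt1_general p hp a b l u ha_mono ha_nonneg hb_mono hb_nonneg hl_cont hl_nonneg hl_int hu_cont
    hu_nonneg hu
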